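/- Let α ∈ Λ^{p,0}V* and write α = ι(a) + i·ι(b) with a, b ∈ Λ^{p,0}V'. Then for η = (−1)^{p(p−1)/2} α ∧ i^p ᾱ ∈ Λ^{p,p}V*, one has η + F(η) = 2·ι((−1)^{p(p−1)/2}(a∧J(a) + b∧J(b))); in particular η + F(η) is the image under ι of a positive Lagerberg form. -/

import Mathlib

/- Setup: `V = ℝⁿ` with its standard basis, `V_ℂ` its complexification,
`V* = Hom_ℝ(V,ℂ)` and `V̄*` the antilinear maps `V_ℂ → ℂ`.  The bigraded exterior algebra
`Λ^{·,·}V* = Λ_ℂ(V* ⊕ V̄*)` is modeled as the exterior algebra over `ℂ` of the free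
complex module on the `2n` generators `du_1,…,du_n` (first summand) and
`dū_1,…,dū_n` (second summand). -/

noncomputable section
open ExteriorAlgebra

/-- The algebra `Λ^{·,·}V* = Λ_ℂ(V* ⊕ V̄*)` for `V = ℝⁿ`. -/
abbrev CForms (n : ℕ) : Type := ExteriorAlgebra ℂ ((Fin n ⊕ Fin n) → ℂ)

/-- The basis element `du_i` of `V*`. -/
def cdu {n : ℕ} (i : Fin n) : CForms n := ExteriorAlgebra.ι ℂ (Pi.single (Sum.inl i) (1 : ℂ))

/-- The basis element `dū_i` of `V̄*`. -/
def cdub {n : ℕ} (i : Fin n) : CForms n := ExteriorAlgebra.ι ℂ (Pi.single (Sum.inr i) (1 : ℂ))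

/-- A general element `Σ cᵢ • du_i` of `V*`. -/
def cOne {n : ℕ} (c : Fin n → ℂ) : CForms n := ∑ i, c i • cdu i

/-- A general element `Σ cᵢ • dū_i` of `V̄*`. -/
def cOneBar {n : ℕ} (c : Fin n → ℂ) : CForms n := ∑ i, c i • cdub i

/-- The conjugate `ᾱ = Σ c̄ᵢ • dū_i ∈ V̄*` of the one-form `α = Σ cᵢ • du_i ∈ V*`. -/
def cConjOne {n : ℕ} (c : Fin n → ℂ) : CForms n := ∑ i, (starRingEnd ℂ) (c i) • cdub i

/-- A decomposable `(p,0)`-form `α₁ ∧ … ∧ α_p` with `α_j ∈ V*`. -/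
def cDecomp {n p : ℕ} (c : Fin p → Fin n → ℂ) : CForms n := (List.ofFn fun j => cOne (c j)).prod

/-- The conjugate `ᾱ₁ ∧ … ∧ ᾱ_p` of the decomposable `(p,0)`-form given by `c`. -/
def cDecompBar {n p : ℕ} (c : Fin p → Fin n → ℂ) : CForms n :=
  (List.ofFn fun j => cConjOne (c j)).prod

/-- `Λ^{p,q}V*`: the span of products of `p` elements of `V*` and `q` elements of `V̄*`. -/
def CFormsPQ (n p q : ℕ) : Submodule ℂ (CForms n) :=
  Submodule.span ℂ { x | ∃ (a : Fin p → Fin n → ℂ) (b : Fin q → Fin n → ℂ),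
    x = cDecomp a * (List.ofFn fun j => cOneBar (b j)).prod }

/-- The convex cone generated by a set `S` (nonnegative real coefficients). -/
def realCone {n : ℕ} (S : Set (CForms n)) : Set (CForms n) :=
  { x | ∃ (m : ℕ) (t : Fin m → ℝ) (y : Fin m → CForms n),
      (∀ k, 0 ≤ t k) ∧ (∀ k, y k ∈ S) ∧ x = ∑ k, (t k : ℂ) • y k }

/-- The generators `α₁ ∧ iᾱ₁ ∧ … ∧ α_p ∧ iᾱ_p` (`α_j ∈ V*`) of the strongly positive cone. -/
def cStrongGen (n p : ℕ) : Set (CForms n) :=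
  { x | ∃ c : Fin p → Fin n → ℂ,
      x = (List.ofFn fun j => cOne (c j) * (Complex.I • cConjOne (c j))).prod }

/-- The cone `Λ^{p,p}_{+,s}V*` of strongly positive `(p,p)`-forms. -/
def cStrongPos (n p : ℕ) : Set (CForms n) := realCone (cStrongGen n p)

/-- The generators `i^{p²} α ∧ ᾱ` (`α ∈ Λ^{p,0}V*`, written as a sum of decomposables)
of the positive cone. -/
def cPosGen (n p : ℕ) : Set (CForms n) :=
  { x | ∃ (m : ℕ) (c : Fin m → Fin p → Fin n → ℂ),
      x = Complex.I ^ (p ^ 2) • ((∑ l, cDecomp (c l)) * (∑ l, cDecompBar (c l))) }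

/-- The cone `Λ^{p,p}_{+}V*` of positive `(p,p)`-forms. -/
def cPos (n p : ℕ) : Set (CForms n) := realCone (cPosGen n p)

/-- The canonical orientation form `ω_n = du_1 ∧ i dū_1 ∧ … ∧ du_n ∧ i dū_n`. -/
def cOmegaTop (n : ℕ) : CForms n := (List.ofFn fun i : Fin n => cdu i * (Complex.I • cdub i)).prod

/-- The set `Λ^{p,p}_{+,w}V*` of weakly positive `(p,p)`-forms: `(p,p)`-forms `ω` such that
for every strongly positive `η` of type `(n-p,n-p)` there is a real `γ ≥ 0` with
`ω ∧ η = γ ω_n`. -/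
def cWeakPos (n p : ℕ) : Set (CForms n) :=
  { x | x ∈ CFormsPQ n p p ∧
      ∀ η ∈ cStrongPos n (n - p), ∃ γ : ℝ, 0 ≤ γ ∧ x * η = (γ : ℂ) • cOmegaTop n }

/-- `σ` is the complex conjugation of `Λ^{·,·}V*`: the (unique) antilinear multiplicative
involution of the ℝ-algebra `Λ^{·,·}V*` with `σ(du_i) = dū_i` and `σ(dū_i) = du_i`. -/
structure IsConjugation (n : ℕ) (σ : CForms n → CForms n) : Prop where
  map_add : ∀ x y, σ (x + y) = σ x + σ y
  map_smul : ∀ (c : ℂ) (x), σ (c • x) = (starRingEnd ℂ) c • σ x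
  map_mul : ∀ x y, σ (x * y) = σ x * σ y
  map_one : σ 1 = 1
  map_du : ∀ i : Fin n, σ (cdu i) = cdub i
  map_dub : ∀ i : Fin n, σ (cdub i) = cdu i

/-- `F` is the antilinear involution of the ℝ-algebra `Λ^{·,·}V*` determined by
`F(λ) = λ̄`, `F(du_i) = du_i` and `F(dū_i) = -dū_i`. -/
structure IsFInvolution (n : ℕ) (F : CForms n → CForms n) : Prop where
  map_add : ∀ x y, F (x + y) = F x + F y
  map_smul : ∀ (c : ℂ) (x), F (c • x) = (starRingEnd ℂ) c • F x
  map_mul : ∀ x y, F (x * y) = F x * F y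
  map_one : F 1 = 1
  map_du : ∀ i : Fin n, F (cdu i) = cdu i
  map_dub : ∀ i : Fin n, F (cdub i) = - cdub i

/-- The algebra `Λ^{·,·}V' = Λ_ℝ(V' ⊕ V'')` of Lagerberg forms for `V = ℝⁿ`. -/
abbrev LForms (n : ℕ) : Type := ExteriorAlgebra ℝ ((Fin n ⊕ Fin n) → ℝ)

/-- The basis element `d'u_i` of `V'`. -/
def ldu {n : ℕ} (i : Fin n) : LForms n := ExteriorAlgebra.ι ℝ (Pi.single (Sum.inl i) (1 : ℝ))

/-- The basis element `d''u_i` of `V''`. -/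
def lddu {n : ℕ} (i : Fin n) : LForms n := ExteriorAlgebra.ι ℝ (Pi.single (Sum.inr i) (1 : ℝ))

/-- A general element `Σ cᵢ • d'u_i` of `V'`. -/
def lOne {n : ℕ} (c : Fin n → ℝ) : LForms n := ∑ i, c i • ldu i

/-- A general element `Σ cᵢ • d''u_i` of `V''`; note `J(Σ cᵢ d'u_i) = Σ cᵢ d''u_i`. -/
def lOne'' {n : ℕ} (c : Fin n → ℝ) : LForms n := ∑ i, c i • lddu i

/-- A decomposable `(p,0)`-form `α₁ ∧ … ∧ α_p` with `α_j ∈ V'`. -/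
def lDecomp {n p : ℕ} (c : Fin p → Fin n → ℝ) : LForms n := (List.ofFn fun j => lOne (c j)).prod

/-- Its image `J(α₁) ∧ … ∧ J(α_p)` under the Lagerberg involution. -/
def lDecomp'' {n p : ℕ} (c : Fin p → Fin n → ℝ) : LForms n :=
  (List.ofFn fun j => lOne'' (c j)).prod

/-- `Λ^{p,q}V'`: the span of products of `p` elements of `V'` and `q` elements of `V''`. -/
def LFormsPQ (n p q : ℕ) : Submodule ℝ (LForms n) :=
  Submodule.span ℝ { x | ∃ (a : Fin p → Fin n → ℝ) (b : Fin q → Fin n → ℝ),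
    x = lDecomp a * lDecomp'' b }

/-- The convex cone generated by a set `S` (nonnegative real coefficients). -/
def lCone {n : ℕ} (S : Set (LForms n)) : Set (LForms n) :=
  { x | ∃ (m : ℕ) (t : Fin m → ℝ) (y : Fin m → LForms n),
      (∀ k, 0 ≤ t k) ∧ (∀ k, y k ∈ S) ∧ x = ∑ k, t k • y k }

/-- The generators `α₁ ∧ J(α₁) ∧ … ∧ α_p ∧ J(α_p)` (`α_j ∈ V'`) of the strongly positive
cone. -/
def lStrongGen (n p : ℕ) : Set (LForms n) :=
  { x | ∃ c : Fin p → Fin n → ℝ, x = (List.ofFn fun j => lOne (c j) * lOne'' (c j)).prod }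

/-- The cone `Λ^{p,p}_{+,s}V'` of strongly positive Lagerberg `(p,p)`-forms. -/
def lStrongPos (n p : ℕ) : Set (LForms n) := lCone (lStrongGen n p)

/-- The generators `(-1)^{p(p-1)/2} α ∧ J(α)` (`α ∈ Λ^{p,0}V'`, written as a sum of
decomposables) of the positive cone. -/
def lPosGen (n p : ℕ) : Set (LForms n) :=
  { x | ∃ (m : ℕ) (c : Fin m → Fin p → Fin n → ℝ),
      x = ((-1 : ℝ)) ^ (p * (p - 1) / 2) • ((∑ l, lDecomp (c l)) * (∑ l, lDecomp'' (c l))) }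

/-- The cone `Λ^{p,p}_{+}V'` of positive Lagerberg `(p,p)`-forms. -/
def lPos (n p : ℕ) : Set (LForms n) := lCone (lPosGen n p)

/-- The Lagerberg orientation form `τ_n = d'u_1 ∧ d''u_1 ∧ … ∧ d'u_n ∧ d''u_n`. -/
def lTauTop (n : ℕ) : LForms n := (List.ofFn fun i : Fin n => ldu i * lddu i).prod

/-- `J` is the Lagerberg involution: the (unique) ℝ-algebra automorphism of `Λ^{·,·}V'`
with `J(d'u_i) = d''u_i` and `J(d''u_i) = d'u_i`. -/
structure IsLagerbergJ (n : ℕ) (J : LForms n → LForms n) : Prop where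
  map_add : ∀ x y, J (x + y) = J x + J y
  map_smul : ∀ (c : ℝ) (x), J (c • x) = c • J x
  map_mul : ∀ x y, J (x * y) = J x * J y
  map_one : J 1 = 1
  map_du : ∀ i : Fin n, J (ldu i) = lddu i
  map_ddu : ∀ i : Fin n, J (lddu i) = ldu i

/-- The set `Λ^{p,p}_{sym}V'` of symmetric Lagerberg `(p,p)`-forms:
those with `J(ω) = (-1)^p ω`. -/
def lSym (n p : ℕ) (J : LForms n → LForms n) : Set (LForms n) :=
  { x | x ∈ LFormsPQ n p p ∧ J x = ((-1 : ℝ)) ^ p • x }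

/-- The set `Λ^{p,p}_{+,w}V'` of weakly positive Lagerberg `(p,p)`-forms: symmetric
`(p,p)`-forms `ω` such that for every strongly positive `η` of type `(n-p,n-p)` there is a
real `γ ≥ 0` with `ω ∧ η = γ τ_n`. -/
def lWeakPos (n p : ℕ) (J : LForms n → LForms n) : Set (LForms n) :=
  { x | x ∈ lSym n p J ∧
      ∀ η ∈ lStrongPos n (n - p), ∃ γ : ℝ, 0 ≤ γ ∧ x * η = γ • lTauTop n }

/-- `ι` is the canonical embedding `Λ^{·,·}V' → Λ^{·,·}V*`: the (unique) ℝ-algebra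
homomorphism with `ι(d'u_j) = du_j` and `ι(d''u_j) = i dū_j`.  Its image is the set of
`F`-invariant complex forms. -/
structure IsIota (n : ℕ) (ι : LForms n → CForms n) : Prop where
  map_add : ∀ x y, ι (x + y) = ι x + ι y
  map_smul : ∀ (c : ℝ) (x), ι (c • x) = (c : ℂ) • ι x
  map_mul : ∀ x y, ι (x * y) = ι x * ι y
  map_one : ι 1 = 1
  map_du : ∀ i : Fin n, ι (ldu i) = cdu i
  map_ddu : ∀ i : Fin n, ι (lddu i) = Complex.I • cdub i

/-! `F` fixes the image of `ι`, because `F ∘ ι` satisfies the defining properties of `ι`.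
On one-forms `σ ∘ ι = -i • ι ∘ J`, so on products of `p` one-forms, hence on all of
`Λ^{p,0}V'`, `σ ∘ ι = (-i)^p • ι ∘ J`. Thus `i^p σ(α) = ι(J a) - i ι(J b)` and
`α ∧ i^p ᾱ = ι(a J a + b J b) + i ι(b J a - a J b)`; `F` only flips the sign of the
imaginary part, which cancels in `η + F η`.
For positivity, `a` is a sum of decomposables, so `(-1)^{p(p-1)/2} a ∧ J a` is a generator of
the positive cone (for `p = 0`, `a` is real and `a ∧ J a = a²`), and likewise for `b`. -/

open Complex

variable {n : ℕ}

theorem List.prod_ofFn_smul {R A : Type*} [CommSemiring R] [Semiring A] [Algebra R A] (r : R) :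
    ∀ {p : ℕ} (f : Fin p → A), (List.ofFn fun j => r • f j).prod = r ^ p • (List.ofFn f).prod
  | 0, _ => by simp
  | p + 1, f => by
    rw [List.ofFn_succ, List.ofFn_succ, List.prod_cons, List.prod_cons,
      List.prod_ofFn_smul r (fun j => f j.succ), smul_mul_smul_comm, pow_succ']

lemma add_I_smul_mul_sub_I_smul {A : Type*} [Ring A] [Algebra ℂ A] (x y x' y' : A) :
    (x + I • y) * (x' - I • y') = x * x' + y * y' + I • (y * x' - x * y') := by
  simp only [add_mul, mul_sub, smul_mul_assoc, mul_smul_comm, smul_add, smul_smul, I_mul_I]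
  module

namespace IsIota

variable {ι : LForms n → CForms n}

def toAlgHom (hι : IsIota n ι) : LForms n →ₐ[ℝ] CForms n where
  toFun := ι
  map_one' := hι.map_one
  map_mul' := hι.map_mul
  map_zero' := by simpa using hι.map_smul 0 0
  map_add' := hι.map_add
  commutes' r := by
    simp only [Algebra.algebraMap_eq_smul_one, hι.map_smul, hι.map_one, Complex.coe_smul]

@[simp] lemma coe_toAlgHom (hι : IsIota n ι) : ⇑hι.toAlgHom = ι := rfl

lemma ext {ι' : LForms n → CForms n} (hι : IsIota n ι) (hι' : IsIota n ι') : ι = ι' := by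
  suffices hι.toAlgHom = hι'.toAlgHom from congrArg DFunLike.coe this
  refine ExteriorAlgebra.hom_ext (LinearMap.pi_ext fun k x => ?_)
  rw [← mul_one x, ← smul_eq_mul, Pi.single_smul']
  simp only [LinearMap.comp_apply, LinearMap.map_smul, AlgHom.toLinearMap_apply, coe_toAlgHom]
  congr 1
  rcases k with i | i
  · exact (hι.map_du i).trans (hι'.map_du i).symm
  · exact (hι.map_ddu i).trans (hι'.map_ddu i).symm

lemma comp_of_isFInvolution {F : CForms n → CForms n} (hF : IsFInvolution n F)
    (hι : IsIota n ι) : IsIota n (F ∘ ι) where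
  map_add x y := by simp only [Function.comp_apply, hι.map_add, hF.map_add]
  map_smul c x := by
    simp only [Function.comp_apply, hι.map_smul, hF.map_smul, Complex.conj_ofReal]
  map_mul x y := by simp only [Function.comp_apply, hι.map_mul, hF.map_mul]
  map_one := by simp only [Function.comp_apply, hι.map_one, hF.map_one]
  map_du i := by simp only [Function.comp_apply, hι.map_du, hF.map_du]
  map_ddu i := by
    simp only [Function.comp_apply, hι.map_ddu, hF.map_smul, hF.map_dub, Complex.conj_I,
      neg_smul, smul_neg, neg_neg]

end IsIota

def IsLagerbergJ.toAlgHom {J : LForms n → LForms n} (hJ : IsLagerbergJ n J) :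
    LForms n →ₐ[ℝ] LForms n where
  toFun := J
  map_one' := hJ.map_one
  map_mul' := hJ.map_mul
  map_zero' := by simpa using hJ.map_smul 0 0
  map_add' := hJ.map_add
  commutes' r := by
    simp only [Algebra.algebraMap_eq_smul_one, hJ.map_smul, hJ.map_one]

def IsConjugation.toRealAlgHom {σ : CForms n → CForms n} (hσ : IsConjugation n σ) :
    CForms n →ₐ[ℝ] CForms n where
  toFun := σ
  map_one' := hσ.map_one
  map_mul' := hσ.map_mul
  map_zero' := by simpa using hσ.map_smul 0 0
  map_add' := hσ.map_add
  commutes' r := by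
    simp only [Algebra.algebraMap_eq_smul_one, ← Complex.coe_smul, hσ.map_smul, hσ.map_one,
      Complex.conj_ofReal]

section FInvolution

variable {F : CForms n → CForms n} {ι : LForms n → CForms n}

lemma IsFInvolution.apply_iota (hF : IsFInvolution n F) (hι : IsIota n ι) (x : LForms n) :
    F (ι x) = ι x :=
  congrFun ((hι.comp_of_isFInvolution hF).ext hι) x

lemma IsFInvolution.apply_iota_add_I_smul (hF : IsFInvolution n F) (hι : IsIota n ι)
    (x y : LForms n) : F (ι x + I • ι y) = ι x - I • ι y := by
  rw [hF.map_add, hF.map_smul, hF.apply_iota hι, hF.apply_iota hι, conj_I, neg_smul,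
    sub_eq_add_neg]

end FInvolution

lemma lOne_mem_range_ι (c : Fin n → ℝ) : lOne c ∈ LinearMap.range (ExteriorAlgebra.ι ℝ) :=
  Submodule.sum_mem _ fun _ _ => Submodule.smul_mem _ _ (LinearMap.mem_range_self _ _)

lemma lDecomp_mem_exteriorPower {p : ℕ} (c : Fin p → Fin n → ℝ) :
    lDecomp c ∈ ⋀[ℝ]^p ((Fin n ⊕ Fin n) → ℝ) := by
  choose v hv using fun j => lOne_mem_range_ι (c j)
  have : lDecomp c = ExteriorAlgebra.ιMulti ℝ p v := by
    simp [lDecomp, ExteriorAlgebra.ιMulti_apply, hv]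
  exact this ▸ ExteriorAlgebra.ιMulti_range ℝ p ⟨v, rfl⟩

lemma lDecomp''_of_fin_zero (b : Fin 0 → Fin n → ℝ) : lDecomp'' b = 1 := by simp [lDecomp'']

lemma LFormsPQ_le_exteriorPower (p : ℕ) : LFormsPQ n p 0 ≤ ⋀[ℝ]^p ((Fin n ⊕ Fin n) → ℝ) :=
  Submodule.span_le.2 <| by
    rintro _ ⟨c, b, rfl⟩
    rw [lDecomp''_of_fin_zero, mul_one]
    exact lDecomp_mem_exteriorPower c

section Conjugation

variable {σ : CForms n → CForms n} {ι : LForms n → CForms n} {J : LForms n → LForms n}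

lemma IsConjugation.apply_iota_ι (hσ : IsConjugation n σ) (hι : IsIota n ι)
    (hJ : IsLagerbergJ n J) (u : (Fin n ⊕ Fin n) → ℝ) :
    σ (ι (ExteriorAlgebra.ι ℝ u)) = (-I) • ι (J (ExteriorAlgebra.ι ℝ u)) := by
  suffices (hσ.toRealAlgHom.comp hι.toAlgHom).toLinearMap ∘ₗ ExteriorAlgebra.ι ℝ =
      (-I) • ((hι.toAlgHom.comp hJ.toAlgHom).toLinearMap ∘ₗ ExteriorAlgebra.ι ℝ) from
    LinearMap.congr_fun this u
  refine LinearMap.pi_ext fun k x => ?_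
  rw [← mul_one x, ← smul_eq_mul, Pi.single_smul']
  simp only [LinearMap.smul_apply, LinearMap.comp_apply, LinearMap.map_smul,
    AlgHom.toLinearMap_apply, AlgHom.comp_apply]
  rw [smul_comm]
  congr 1
  rcases k with i | i
  · change σ (ι (ldu i)) = -I • ι (J (ldu i))
    rw [hι.map_du, hσ.map_du, hJ.map_du, hι.map_ddu, smul_smul, neg_mul, I_mul_I, neg_neg,
      one_smul]
  · change σ (ι (lddu i)) = -I • ι (J (lddu i))
    rw [hι.map_ddu, hσ.map_smul, hσ.map_dub, hJ.map_ddu, hι.map_du, conj_I]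

lemma IsConjugation.apply_iota_of_mem_exteriorPower (hσ : IsConjugation n σ) (hι : IsIota n ι)
    (hJ : IsLagerbergJ n J) {p : ℕ} {x : LForms n}
    (hx : x ∈ ⋀[ℝ]^p ((Fin n ⊕ Fin n) → ℝ)) :
    σ (ι x) = (-I) ^ p • ι (J x) := by
  change (hσ.toRealAlgHom.comp hι.toAlgHom) x = (-I) ^ p • (hι.toAlgHom.comp hJ.toAlgHom) x
  rw [← ExteriorAlgebra.ιMulti_span_fixedDegree] at hx
  induction hx using Submodule.span_induction with
  | mem x hx =>
    obtain ⟨v, rfl⟩ := hx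
    rw [ExteriorAlgebra.ιMulti_apply, map_list_prod, map_list_prod, List.map_ofFn,
      List.map_ofFn, ← List.prod_ofFn_smul]
    exact congrArg _ (List.ofFn_inj.mpr (funext fun j => hσ.apply_iota_ι hι hJ (v j)))
  | zero => rw [_root_.map_zero, _root_.map_zero, smul_zero]
  | add x y _ _ hx hy => rw [_root_.map_add, _root_.map_add, hx, hy, smul_add]
  | smul r x _ hx => rw [_root_.map_smul, _root_.map_smul, hx, smul_comm]

lemma I_pow_smul_apply_iota_add_I_smul (hσ : IsConjugation n σ) (hι : IsIota n ι)
    (hJ : IsLagerbergJ n J) {p : ℕ} {a b : LForms n}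
    (ha : a ∈ ⋀[ℝ]^p ((Fin n ⊕ Fin n) → ℝ)) (hb : b ∈ ⋀[ℝ]^p ((Fin n ⊕ Fin n) → ℝ)) :
    I ^ p • σ (ι a + I • ι b) = ι (J a) - I • ι (J b) := by
  have hI : I ^ p * (-I) ^ p = 1 := by rw [← mul_pow, mul_neg, I_mul_I, neg_neg, one_pow]
  rw [hσ.map_add, hσ.map_smul, conj_I, hσ.apply_iota_of_mem_exteriorPower hι hJ ha,
    hσ.apply_iota_of_mem_exteriorPower hι hJ hb, smul_add, smul_smul, hI, smul_comm (-I),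
    smul_smul, hI, one_smul, one_smul, neg_smul, sub_eq_add_neg]

end Conjugation
lemma lOne_smul (r : ℝ) (c : Fin n → ℝ) : lOne (r • c) = r • lOne c := by
  simp only [lOne, Finset.smul_sum, Pi.smul_apply, smul_eq_mul, smul_smul]

lemma smul_lDecomp {q : ℕ} (r : ℝ) (c : Fin (q + 1) → Fin n → ℝ) :
    r • lDecomp c = lDecomp (Function.update c 0 (r • c 0)) := by
  simp only [lDecomp, List.ofFn_succ, List.prod_cons, Function.update_self,
    Function.update_of_ne (Fin.succ_ne_zero _), lOne_smul, smul_mul_assoc]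

lemma exists_eq_sum_lDecomp_of_mem_LFormsPQ {p : ℕ} (hp : p ≠ 0) {x : LForms n}
    (hx : x ∈ LFormsPQ n p 0) :
    ∃ (m : ℕ) (c : Fin m → Fin p → Fin n → ℝ), x = ∑ l, lDecomp (c l) := by
  obtain ⟨q, rfl⟩ := Nat.exists_eq_succ_of_ne_zero hp
  induction hx using Submodule.span_induction with
  | mem x hx =>
    obtain ⟨c, b, rfl⟩ := hx
    exact ⟨1, fun _ => c, by rw [lDecomp''_of_fin_zero, mul_one, Fin.sum_univ_one]⟩
  | zero => exact ⟨0, finZeroElim, by simp⟩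
  | add x y _ _ hx hy =>
    obtain ⟨m, c, rfl⟩ := hx
    obtain ⟨m', c', rfl⟩ := hy
    exact ⟨m + m', Fin.append c c', by simp [Fin.sum_univ_add]⟩
  | smul r x _ hx =>
    obtain ⟨m, c, rfl⟩ := hx
    exact ⟨m, fun l => Function.update (c l) 0 (r • c l 0), by simp [Finset.smul_sum, smul_lDecomp]⟩

lemma exists_eq_smul_one_of_mem_LFormsPQ_zero {x : LForms n} (hx : x ∈ LFormsPQ n 0 0) :
    ∃ r : ℝ, x = r • 1 := by
  induction hx using Submodule.span_induction with
  | mem x hx =>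
    obtain ⟨c, b, rfl⟩ := hx
    exact ⟨1, by simp [lDecomp, lDecomp'']⟩
  | zero => exact ⟨0, by simp⟩
  | add x y _ _ hx hy =>
    obtain ⟨r, rfl⟩ := hx
    obtain ⟨s, rfl⟩ := hy
    exact ⟨r + s, by rw [add_smul]⟩
  | smul r x _ hx =>
    obtain ⟨s, rfl⟩ := hx
    exact ⟨r * s, by rw [smul_smul]⟩

section lCone

variable {S : Set (LForms n)} {x y : LForms n}

lemma subset_lCone : S ⊆ lCone S :=
  fun x hx => ⟨1, fun _ => 1, fun _ => x, fun _ => zero_le_one, fun _ => hx, by simp⟩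

lemma add_mem_lCone (hx : x ∈ lCone S) (hy : y ∈ lCone S) : x + y ∈ lCone S := by
  obtain ⟨m, t, u, ht, hu, rfl⟩ := hx
  obtain ⟨m', t', u', ht', hu', rfl⟩ := hy
  exact ⟨m + m', Fin.append t t', Fin.append u u', Fin.addCases (by simpa) (by simpa),
    Fin.addCases (by simpa) (by simpa), by simp [Fin.sum_univ_add]⟩

lemma smul_mem_lCone {t : ℝ} (ht : 0 ≤ t) (hx : x ∈ lCone S) : t • x ∈ lCone S := by
  obtain ⟨m, s, u, hs, hu, rfl⟩ := hx
  exact ⟨m, t • s, u, fun k => mul_nonneg ht (hs k), hu, by simp [Finset.smul_sum, smul_smul]⟩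

end lCone

section Lagerberg

variable {J : LForms n → LForms n}

lemma IsLagerbergJ.apply_lOne (hJ : IsLagerbergJ n J) (c : Fin n → ℝ) : J (lOne c) = lOne'' c := by
  change hJ.toAlgHom _ = _
  simp only [lOne, lOne'', map_sum, _root_.map_smul]
  exact Finset.sum_congr rfl fun i _ => congrArg _ (hJ.map_du i)

lemma IsLagerbergJ.apply_lDecomp (hJ : IsLagerbergJ n J) {p : ℕ} (c : Fin p → Fin n → ℝ) :
    J (lDecomp c) = lDecomp'' c := by
  change hJ.toAlgHom _ = _
  rw [lDecomp, map_list_prod, List.map_ofFn]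
  exact congrArg _ (List.ofFn_inj.mpr (funext fun j => hJ.apply_lOne (c j)))

lemma IsLagerbergJ.apply_sum_lDecomp (hJ : IsLagerbergJ n J) {m p : ℕ}
    (c : Fin m → Fin p → Fin n → ℝ) : J (∑ l, lDecomp (c l)) = ∑ l, lDecomp'' (c l) := by
  change hJ.toAlgHom _ = _
  rw [map_sum]
  exact Finset.sum_congr rfl fun l _ => hJ.apply_lDecomp (c l)

lemma sign_smul_mul_apply_mem_lPos (hJ : IsLagerbergJ n J) {p : ℕ}
    {x : LForms n} (hx : x ∈ LFormsPQ n p 0) :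
    (-1 : ℝ) ^ (p * (p - 1) / 2) • (x * J x) ∈ lPos n p := by
  rcases eq_or_ne p 0 with rfl | hp
  · obtain ⟨r, rfl⟩ := exists_eq_smul_one_of_mem_LFormsPQ_zero hx
    have hone : (1 : LForms n) ∈ lPos n 0 :=
      subset_lCone ⟨1, fun _ => finZeroElim, by simp [lDecomp, lDecomp'']⟩
    simpa [lPos, hJ.map_smul, hJ.map_one, smul_smul] using
      smul_mem_lCone (mul_self_nonneg r) hone
  · obtain ⟨m, c, rfl⟩ := exists_eq_sum_lDecomp_of_mem_LFormsPQ hp hx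
    exact subset_lCone ⟨m, c, by rw [hJ.apply_sum_lDecomp]⟩

end Lagerberg

/-- key claim in the proof of Proposition 2.17.
Let `α ∈ Λ^{p,0}V*` and write `α = ι(a) + i·ι(b)` with `a, b ∈ Λ^{p,0}V'`.  Then for
`η = (-1)^{p(p-1)/2} α ∧ i^p ᾱ ∈ Λ^{p,p}V*` one has
`η + F(η) = 2·ι((-1)^{p(p-1)/2}(a ∧ J(a) + b ∧ J(b)))`; in particular `η + F(η)` is the
image under `ι` of a positive Lagerberg form. -/
theorem eta_plus_F_eta_is_positive_lagerberg (n p : ℕ)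
    (σ : CForms n → CForms n) (hσ : IsConjugation n σ)
    (F : CForms n → CForms n) (hF : IsFInvolution n F)
    (J : LForms n → LForms n) (hJ : IsLagerbergJ n J)
    (ι : LForms n → CForms n) (hι : IsIota n ι)
    (a b : LForms n) (ha : a ∈ LFormsPQ n p 0) (hb : b ∈ LFormsPQ n p 0)
    (α : CForms n) (hα : α = ι a + Complex.I • ι b)
    (η : CForms n)
    (hη : η = ((-1 : ℂ)) ^ (p * (p - 1) / 2) • (α * (Complex.I ^ p • σ α))) :
    η + F η =
      (2 : ℂ) • ι (((-1 : ℝ)) ^ (p * (p - 1) / 2) • (a * J a + b * J b)) ∧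
    ∃ γ ∈ lPos n p, η + F η = ι γ := by
  set s := p * (p - 1) / 2
  have hσα : I ^ p • σ α = ι (J a) - I • ι (J b) := by
    rw [hα, I_pow_smul_apply_iota_add_I_smul hσ hι hJ (LFormsPQ_le_exteriorPower p ha)
      (LFormsPQ_le_exteriorPower p hb)]
  obtain ⟨ιA, rfl⟩ : ∃ ιA : LForms n →ₐ[ℝ] CForms n, ⇑ιA = ι := ⟨hι.toAlgHom, rfl⟩
  have hαα : α * (I ^ p • σ α) = ιA (a * J a + b * J b) + I • ιA (b * J a - a * J b) := by
    rw [hσα, hα, add_I_smul_mul_sub_I_smul, map_add, map_sub, map_mul, map_mul, map_mul, map_mul]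
  have hsum : η + F η = (2 : ℂ) • ιA ((-1 : ℝ) ^ s • (a * J a + b * J b)) := by
    rw [hη, hF.map_smul, hαα, hF.apply_iota_add_I_smul hι, map_smul, ← algebraMap_smul ℂ]
    simp only [map_pow, map_neg, map_one]
    module
  refine ⟨hsum, (2 : ℝ) • (-1 : ℝ) ^ s • (a * J a + b * J b), ?_,
    by rw [hsum, two_smul, two_smul, map_add]⟩
  rw [smul_add]
  exact smul_mem_lCone zero_le_two
    (add_mem_lCone (sign_smul_mul_apply_mem_lPos hJ ha) (sign_smul_mul_apply_mem_lPos hJ hb))
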